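/- arXiv:math/0403410 — 6 statements merged into one kernel-verified Lean document; each statement's English description precedes it below -/
import Mathlib

section
/- The linear map ρ¹ : h₁ → gl(3,K) defined on the basis by ρ¹(X) = e₃₂, ρ¹(Y) = 0, ρ¹(Z) = 0 is a 1-cocycle for the standard inclusion ρ of h₁ into gl(3,K); that is, for all A, B in h₁, ρ¹([A,B]) - [ρ(A), ρ¹(B)] + [ρ(B), ρ¹(A)] = 0. -/
open Matrix

variable (K : Type*) [Field K]

/-- `gl(3,K)`, the Lie algebra of all 3×3 matrices with the commutator bracket. -/
abbrev gl3 (K : Type*) [Field K] := Matrix (Fin 3) (Fin 3) K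

/-- The elementary matrix `e_{ij}` (indices 0-based). -/
def E (i j : Fin 3) : gl3 K := Matrix.single i j 1

/-- The set of strictly lower triangular 3×3 matrices: the Heisenberg algebra `h₁`. -/
def lowerTri : Set (gl3 K) := {A | ∀ i j : Fin 3, i ≤ j → A i j = 0}

/-- The cocycle `ρ¹`: `X ↦ e₃₂`, `Y, Z ↦ 0` (read off via the `X`-coordinate `A 1 0`). -/
def rho1 (A : gl3 K) : gl3 K := A 1 0 • E K 2 1

/-- The cocycle `ρ²`: `Z ↦ e₂₁`, `X, Y ↦ 0`. -/
def rho2 (A : gl3 K) : gl3 K := A 2 1 • E K 1 0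

/-- The cocycle `ρ³`: `Y ↦ e₂₁`, `Z ↦ 2e₂₂ + e₁₁`, `X ↦ 0`. -/
def rho3 (A : gl3 K) : gl3 K := A 2 0 • E K 1 0 + A 2 1 • ((2 : K) • E K 1 1 + E K 0 0)

/-- The cocycle `ρ⁴`: `X ↦ I`, `Y, Z ↦ 0`. -/
def rho4 (A : gl3 K) : gl3 K := A 1 0 • (1 : gl3 K)

/-!
Commutators in `h₁` lie in `K·Y`, which has no `X`-coordinate, so `ρ¹` kills them. For `A ∈ h₁` with
`X`-coordinate `a` one has `[A, Z] = -a·Y`, so `[A, ρ¹(B)]` and `[B, ρ¹(A)]` both equal `-ab·Y` and cancel.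
-/

variable {K}

theorem mul_apply_one_zero_of_mem_lowerTri {A B : gl3 K} (hA : A ∈ lowerTri K)
    (hB : B ∈ lowerTri K) : (A * B) 1 0 = 0 := by
  simp [mul_apply, Fin.sum_univ_three, hA 1 1 le_rfl, hA 1 2 (by decide), hB 0 0 le_rfl]

theorem rho1_commutator_of_mem_lowerTri {A B : gl3 K} (hA : A ∈ lowerTri K)
    (hB : B ∈ lowerTri K) : rho1 K (A * B - B * A) = 0 := by
  rw [rho1, Matrix.sub_apply, mul_apply_one_zero_of_mem_lowerTri hA hB,
    mul_apply_one_zero_of_mem_lowerTri hB hA, sub_self, zero_smul]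

theorem mul_E_two_one_of_mem_lowerTri {A : gl3 K} (hA : A ∈ lowerTri K) :
    A * E K 2 1 = 0 := by
  ext i j
  by_cases hj : j = 1
  · subst hj
    simp [E, hA i 2 (Fin.le_last i)]
  · simp [E, mul_single_apply_of_ne _ _ _ _ _ hj]

theorem E_two_one_mul_of_mem_lowerTri {A : gl3 K} (hA : A ∈ lowerTri K) :
    E K 2 1 * A = A 1 0 • E K 2 0 := by
  ext i j
  fin_cases i <;> fin_cases j <;> simp [E, hA 1 1 le_rfl, hA 1 2 (by decide)]

theorem commutator_E_two_one_of_mem_lowerTri {A : gl3 K} (hA : A ∈ lowerTri K) :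
    A * E K 2 1 - E K 2 1 * A = -(A 1 0 • E K 2 0) := by
  rw [mul_E_two_one_of_mem_lowerTri hA, E_two_one_mul_of_mem_lowerTri hA, zero_sub]

theorem commutator_rho1_of_mem_lowerTri {A B : gl3 K} (hA : A ∈ lowerTri K) :
    A * rho1 K B - rho1 K B * A = -((B 1 0 * A 1 0) • E K 2 0) := by
  rw [rho1, mul_smul_comm, smul_mul_assoc, ← smul_sub, commutator_E_two_one_of_mem_lowerTri hA,
    smul_neg, smul_smul]

variable (K) in
/-- The map `rho1` is a 1-cocycle for the standard inclusion of `h₁` in `gl(3,K)`: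
`m([A,B]) - [A, m(B)] + [B, m(A)] = 0` for all `A, B ∈ h₁`. -/
theorem rho1_is_cocycle :
    ∀ A ∈ lowerTri K, ∀ B ∈ lowerTri K,
      rho1 K (A * B - B * A)
        - (A * rho1 K B - rho1 K B * A)
        + (B * rho1 K A - rho1 K A * B) = 0 := by
  intro A hA B hB
  rw [rho1_commutator_of_mem_lowerTri hA hB, commutator_rho1_of_mem_lowerTri hA,
    commutator_rho1_of_mem_lowerTri hB, mul_comm]
  abel
end

section
/- The linear map ρ³ : h₁ → gl(3,K) defined by ρ³(X) = 0, ρ³(Y) = e₂₁, ρ³(Z) = 2e₂₂ + e₁₁ is a 1-cocycle for the standard inclusion of h₁ into gl(3,K). -/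
open Matrix

variable (K : Type*) [Field K]

/-! On `h₁` we have `ρ³(A) = [e₂₃, A] + A₃₂ • 1`: an inner derivation, which is a cocycle by the
Jacobi identity, plus a scalar-valued functional vanishing on `[h₁, h₁] = K·Y`, which is a cocycle
because scalars are central. -/

theorem cocycle_of_eq_commutator_add_smul_one {S R : Type*} [CommRing S] [Ring R] [Algebra S R]
    (m : R → R) (f : R → S) (M A B : R)
    (hmA : m A = M * A - A * M + f A • 1) (hmB : m B = M * B - B * M + f B • 1)
    (hmAB : m (A * B - B * A) = M * (A * B - B * A) - (A * B - B * A) * M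
      + f (A * B - B * A) • 1)
    (hfAB : f (A * B - B * A) = 0) :
    m (A * B - B * A) - (A * m B - m B * A) + (B * m A - m A * B) = 0 := by
  rw [hmA, hmB, hmAB, hfAB]
  simp only [zero_smul, add_zero, mul_add, add_mul, mul_smul_comm, smul_mul_assoc, mul_one,
    one_mul]
  noncomm_ring

theorem strictLower_mul_apply_eq_zero {n R : Type*} [Fintype n] [LinearOrder n]
    [NonUnitalNonAssocSemiring R] {A B : Matrix n n R}
    (hA : ∀ i j, i ≤ j → A i j = 0) (hB : ∀ i j, i ≤ j → B i j = 0) {i j : n}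
    (hij : ∀ k, j < k → i ≤ k) : (A * B) i j = 0 := by
  refine Finset.sum_eq_zero fun k _ => ?_
  dsimp only
  rcases lt_or_ge j k with hjk | hkj
  · rw [hA i k (hij k hjk), zero_mul]
  · rw [hB k j hkj, mul_zero]

section

variable {K}

theorem commutator_mem_lowerTri {A B : gl3 K} (hA : A ∈ lowerTri K) (hB : B ∈ lowerTri K) :
    A * B - B * A ∈ lowerTri K := fun i j hij => by
  have hle : ∀ k, j < k → i ≤ k := fun k hjk => hij.trans hjk.le
  rw [Matrix.sub_apply, strictLower_mul_apply_eq_zero hA hB hle,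
    strictLower_mul_apply_eq_zero hB hA hle, sub_zero]

theorem commutator_apply_two_one {A B : gl3 K} (hA : A ∈ lowerTri K) (hB : B ∈ lowerTri K) :
    (A * B - B * A) 2 1 = 0 := by
  have hle : ∀ k : Fin 3, 1 < k → 2 ≤ k := by decide
  rw [Matrix.sub_apply, strictLower_mul_apply_eq_zero hA hB hle,
    strictLower_mul_apply_eq_zero hB hA hle, sub_zero]

theorem rho3_eq_of_mem_lowerTri {A : gl3 K} (hA : A ∈ lowerTri K) :
    rho3 K A = E K 1 2 * A - A * E K 1 2 + A 2 1 • 1 := by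
  ext i j
  fin_cases i <;> fin_cases j <;>
    simp [rho3, E, Matrix.sub_apply, mul_apply, Fin.sum_univ_three, hA _ _, one_apply, mul_two]

end

/-- The map `rho3` is a 1-cocycle for the standard inclusion of `h₁` in `gl(3,K)`:
`m([A,B]) - [A, m(B)] + [B, m(A)] = 0` for all `A, B ∈ h₁`. -/
theorem rho3_is_cocycle :
    ∀ A ∈ lowerTri K, ∀ B ∈ lowerTri K,
      rho3 K (A * B - B * A)
        - (A * rho3 K B - rho3 K B * A)
        + (B * rho3 K A - rho3 K A * B) = 0 := fun A hA B hB =>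
  cocycle_of_eq_commutator_add_smul_one (rho3 K) (fun C => C 2 1) (E K 1 2) A B
    (rho3_eq_of_mem_lowerTri hA) (rho3_eq_of_mem_lowerTri hB)
    (rho3_eq_of_mem_lowerTri (commutator_mem_lowerTri hA hB)) (commutator_apply_two_one hA hB)
end

section
/- None of the four cocycles ρ¹, ρ², ρ³, ρ⁴ is a coboundary; i.e., for each i ∈ {1,2,3,4} there is no matrix M ∈ gl(3,K) such that ρⁱ(A) = [M, A] for all A ∈ h₁. -/
open Matrix

variable (K : Type*) [Field K]

/-! The commutator `[M, e_ij]` is supported on row `i` and column `j` of the matrix, whereas each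
cocycle takes `X = e₂₁` or `Z = e₃₂` to a matrix with a nonzero entry off that row and column.
Comparing entries rather than traces keeps the argument valid in characteristic 3, where
`ρ³(Z)` and `ρ⁴(X)` have trace zero. -/

theorem Matrix.commutator_single_apply_of_ne {n R : Type*} [Fintype n] [DecidableEq n] [Ring R]
    (M : Matrix n n R) {i j k l : n} (c : R) (hk : k ≠ i) (hl : l ≠ j) :
    (M * single i j c - single i j c * M) k l = 0 := by
  rw [sub_apply, mul_single_apply_of_ne c i j k l hl M, single_mul_apply_of_ne c i j k l hk M,
    sub_zero]

theorem not_exists_commutator_eq_of_single_apply_ne_zero {n R : Type*} [Fintype n] [DecidableEq n]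
    [Ring R] {S : Set (Matrix n n R)} (ρ : Matrix n n R → Matrix n n R) {i j k l : n} {c : R}
    (hS : single i j c ∈ S) (hk : k ≠ i) (hl : l ≠ j) (hρ : ρ (single i j c) k l ≠ 0) :
    ¬ ∃ M : Matrix n n R, ∀ A ∈ S, ρ A = M * A - A * M := by
  rintro ⟨M, hM⟩
  exact hρ (by rw [hM _ hS, M.commutator_single_apply_of_ne c hk hl])

theorem E_mem_lowerTri {i j : Fin 3} (h : j < i) : E K i j ∈ lowerTri K := by
  intro a b hab
  rw [E, single_apply, if_neg]
  rintro ⟨rfl, rfl⟩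
  exact absurd hab (not_le.mpr h)

/-- None of the four cocycles `ρ¹, ρ², ρ³, ρ⁴` is a coboundary: there is no matrix `M`
with `ρⁱ(A) = [M, A]` for all `A ∈ h₁`. -/
theorem cocycles_not_coboundaries :
    (¬ ∃ M : gl3 K, ∀ A ∈ lowerTri K, rho1 K A = M * A - A * M) ∧
    (¬ ∃ M : gl3 K, ∀ A ∈ lowerTri K, rho2 K A = M * A - A * M) ∧
    (¬ ∃ M : gl3 K, ∀ A ∈ lowerTri K, rho3 K A = M * A - A * M) ∧
    (¬ ∃ M : gl3 K, ∀ A ∈ lowerTri K, rho4 K A = M * A - A * M) := by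
  have hX : E K 1 0 ∈ lowerTri K := E_mem_lowerTri K (by decide)
  have hZ : E K 2 1 ∈ lowerTri K := E_mem_lowerTri K (by decide)
  refine ⟨?_, ?_, ?_, ?_⟩
  · exact not_exists_commutator_eq_of_single_apply_ne_zero (k := 2) (l := 1) _ hX (by decide) (by decide)
      (by simp [rho1, E])
  · exact not_exists_commutator_eq_of_single_apply_ne_zero (k := 1) (l := 0) _ hZ (by decide) (by decide)
      (by simp [rho2, E])
  · exact not_exists_commutator_eq_of_single_apply_ne_zero (k := 0) (l := 0) _ hZ (by decide) (by decide)
      (by simp [rho3, E])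
  · exact not_exists_commutator_eq_of_single_apply_ne_zero (k := 2) (l := 2) _ hX (by decide) (by decide)
      (by simp [rho4])
end

section
/- The first cohomology space H¹(h₁, gl(3,K)) = Z¹/B¹ has dimension 4 over K. -/
open Matrix

variable (K : Type*) [Field K]

/-- `h₁` as a submodule of `gl(3,K)`. -/
def h1 : Submodule K (gl3 K) where
  carrier := lowerTri K
  add_mem' := by
    intro a b ha hb i j hij
    simp only [Matrix.add_apply, ha i j hij, hb i j hij, add_zero]
  zero_mem' := by intro i j _; rfl
  smul_mem' := by
    intro c a ha i j hij
    simp only [Matrix.smul_apply, ha i j hij, smul_zero]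

lemma comm_mem {K : Type*} [Field K] {A B : gl3 K} (hA : A ∈ h1 K) (hB : B ∈ h1 K) :
    A * B - B * A ∈ h1 K := by
  have hA' : ∀ i j : Fin 3, i ≤ j → A i j = 0 := hA
  have hB' : ∀ i j : Fin 3, i ≤ j → B i j = 0 := hB
  intro i j hij
  have h1 : (A * B) i j = 0 := by
    rw [Matrix.mul_apply]
    exact Finset.sum_eq_zero fun k _ => by
      rcases le_or_gt i k with h | h
      · rw [hA' i k h, zero_mul]
      · rw [hB' k j (h.le.trans hij), mul_zero]
  have h2 : (B * A) i j = 0 := by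
    rw [Matrix.mul_apply]
    exact Finset.sum_eq_zero fun k _ => by
      rcases le_or_gt i k with h | h
      · rw [hB' i k h, zero_mul]
      · rw [hA' k j (h.le.trans hij), mul_zero]
  simp [Matrix.sub_apply, h1, h2]

/-- The space `Z¹(h₁, gl(3,K))` of 1-cocycles: linear maps `m : h₁ → gl(3,K)` with
`m([A,B]) = [A, m(B)] - [B, m(A)]`. -/
def Z1 : Submodule K ((h1 K) →ₗ[K] gl3 K) where
  carrier := {m | ∀ A B : h1 K,
    m ⟨(A : gl3 K) * B - (B : gl3 K) * A, comm_mem A.2 B.2⟩ =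
      ((A : gl3 K) * m B - m B * A) - ((B : gl3 K) * m A - m A * B)}
  add_mem' := by
    intro m n hm hn A B
    simp only [LinearMap.add_apply, hm A B, hn A B]
    noncomm_ring
  zero_mem' := by intro A B; simp
  smul_mem' := by
    intro c m hm A B
    simp only [LinearMap.smul_apply, hm A B, smul_sub, Matrix.mul_smul, Matrix.smul_mul]

/-- The adjoint-action map `gl(3,K) → Hom(h₁, gl(3,K))`, `M ↦ (A ↦ [M,A])`;
its range is the space `B¹` of coboundaries. -/
def adMap : gl3 K →ₗ[K] ((h1 K) →ₗ[K] gl3 K) where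
  toFun M :=
    { toFun := fun A => M * (A : gl3 K) - (A : gl3 K) * M
      map_add' := by
        intro A B
        simp only [Submodule.coe_add]
        noncomm_ring
      map_smul' := by
        intro c A
        simp [Matrix.mul_smul, Matrix.smul_mul, smul_sub] }
  map_add' := by
    intro M N
    ext A
    simp only [LinearMap.coe_mk, AddHom.coe_mk, LinearMap.add_apply]
    noncomm_ring
    simp only [Matrix.add_apply, Matrix.smul_apply, smul_eq_mul, neg_mul, one_mul]
    ring
  map_smul' := by
    intro c M
    ext A
    simp [Matrix.mul_smul, Matrix.smul_mul, smul_sub]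
    ring

/-!
`h₁` has basis `X = e₂₁`, `Y = e₃₁`, `Z = e₃₂` (1-based indices: `e₂₁` is `E K 1 0`), and
`[X, Z] = -Y` is its only nonzero bracket, so a cocycle `m` is determined by `m X`, `m Y`, `m Z`,
subject to the cocycle identity on the three basis brackets. The entries `(m X)₃₂`, `(m Z)₂₁`,
`(m Z)₁₁`, `(m X)₃₃` vanish on every coboundary and take the values of the standard basis of `K⁴`
on `ρ¹, …, ρ⁴`. Conversely, if they vanish, the cocycle identities (solved using `2 ≠ 0`) let one
read off `M` with `m = [M, ·]`. So these four entries induce an isomorphism `H¹ ≃ K⁴`.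
-/

section
variable {K}

lemma E_mem_h1 {i j : Fin 3} (h : j < i) : E K i j ∈ h1 K := by
  intro k l hkl
  simp only [E, single_apply, ite_eq_right_iff, and_imp]
  rintro rfl rfl
  exact absurd hkl (not_le.2 h)

namespace h1

variable (K) in
def X : h1 K := ⟨E K 1 0, E_mem_h1 (by decide)⟩

variable (K) in
def Y : h1 K := ⟨E K 2 0, E_mem_h1 (by decide)⟩

variable (K) in
def Z : h1 K := ⟨E K 2 1, E_mem_h1 (by decide)⟩

lemma upper_entries_eq_zero (A : h1 K) :
    A.1 0 0 = 0 ∧ A.1 0 1 = 0 ∧ A.1 0 2 = 0 ∧ A.1 1 1 = 0 ∧ A.1 1 2 = 0 ∧ A.1 2 2 = 0 :=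
  ⟨A.2 0 0 le_rfl, A.2 0 1 (by decide), A.2 0 2 (by decide), A.2 1 1 le_rfl, A.2 1 2 (by decide),
    A.2 2 2 le_rfl⟩

lemma linearMap_ext {M : Type*} [AddCommGroup M] [Module K M] {f g : h1 K →ₗ[K] M}
    (hX : f (X K) = g (X K)) (hY : f (Y K) = g (Y K)) (hZ : f (Z K) = g (Z K)) : f = g := by
  ext A
  have hA : A = (A : gl3 K) 1 0 • X K + (A : gl3 K) 2 0 • Y K + (A : gl3 K) 2 1 • Z K := by
    ext i j
    fin_cases i <;> fin_cases j <;> simp [X, Y, Z, E, upper_entries_eq_zero A]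
  rw [hA]
  simp only [map_add, map_smul, hX, hY, hZ]

lemma X_mul_Y_sub : (X K : gl3 K) * Y K - Y K * X K = (0 : h1 K) := by
  simp [X, Y, E]

lemma X_mul_Z_sub : (X K : gl3 K) * Z K - Z K * X K = (-Y K : h1 K) := by
  simp [X, Y, Z, E]

lemma Y_mul_Z_sub : (Y K : gl3 K) * Z K - Z K * Y K = (0 : h1 K) := by
  simp [Y, Z, E]

end h1

open h1

lemma map_of_mul_sub_mul_eq_of_mem_Z1 {m : h1 K →ₗ[K] gl3 K} (hm : m ∈ Z1 K) {A B C : h1 K}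
    (hC : (A : gl3 K) * B - B * A = C) :
    m C = ((A : gl3 K) * m B - m B * A) - ((B : gl3 K) * m A - m A * B) := by
  obtain rfl : ⟨(A : gl3 K) * B - B * A, comm_mem A.2 B.2⟩ = C := Subtype.ext hC
  exact hm A B

variable (K) in
def cocycleCoords : Z1 K →ₗ[K] (Fin 4 → K) where
  toFun m := ![m.1 (X K) 2 1, m.1 (Z K) 1 0, m.1 (Z K) 0 0, m.1 (X K) 2 2]
  map_add' m n := by ext i; fin_cases i <;> rfl
  map_smul' c m := by ext i; fin_cases i <;> rfl

lemma cocycleCoords_eq_zero_of_mem_range_adMap {m : Z1 K}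
    (hm : m.1 ∈ LinearMap.range (adMap K)) : cocycleCoords K m = 0 := by
  obtain ⟨M, hM⟩ := hm
  ext i
  fin_cases i <;> simp [cocycleCoords, ← hM, adMap, X, Z, E]

lemma exists_commutator_eq_of_cocycle_identities [NeZero (2 : K)] {a b c : gl3 K}
    (hXY : 0 = (X K : gl3 K) * b - b * X K - (Y K * a - a * Y K))
    (hXZ : -b = (X K : gl3 K) * c - c * X K - (Z K * a - a * Z K))
    (hYZ : 0 = (Y K : gl3 K) * c - c * Y K - (Z K * b - b * Z K))
    (ha : a 2 1 = 0 ∧ a 2 2 = 0) (hc : c 1 0 = 0 ∧ c 0 0 = 0) :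
    ∃ M : gl3 K, M * X K - X K * M = a ∧ M * Y K - Y K * M = b ∧ M * Z K - Z K * M = c := by
  have hXY := fun i j => congrFun (congrFun hXY i) j
  have hXZ := fun i j => congrFun (congrFun hXZ i) j
  have hYZ := fun i j => congrFun (congrFun hYZ i) j
  simp [X, Y, Z, E, Fin.forall_fin_succ] at hXY hXZ hYZ
  have h2 : (2 : K) ≠ 0 := two_ne_zero
  -- `M` is unique up to the centralizer `K ∙ 1 + K ∙ e₃₁` of `h₁`; this choice has `M₁₁ = M₃₁ = 0`.
  let M : gl3 K := !![0, a 0 0, -(a 1 2); -(c 2 0), a 1 0, b 1 0; 0, a 2 0, b 2 0]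
  refine ⟨M, ?_, ?_, ?_⟩ <;> ext i j <;> fin_cases i <;> fin_cases j <;> simp [X, Y, Z, E] <;>
    (try simp [M]) <;> grind

lemma mem_range_adMap_of_cocycleCoords_eq_zero [NeZero (2 : K)] (m : Z1 K)
    (hm : cocycleCoords K m = 0) : m.1 ∈ LinearMap.range (adMap K) := by
  have hXY := map_of_mul_sub_mul_eq_of_mem_Z1 m.2 X_mul_Y_sub
  have hXZ := map_of_mul_sub_mul_eq_of_mem_Z1 m.2 X_mul_Z_sub
  have hYZ := map_of_mul_sub_mul_eq_of_mem_Z1 m.2 Y_mul_Z_sub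
  rw [map_zero] at hXY hYZ
  rw [map_neg] at hXZ
  obtain ⟨M, hMX, hMY, hMZ⟩ := exists_commutator_eq_of_cocycle_identities hXY hXZ hYZ
    ⟨congrFun hm 0, congrFun hm 3⟩ ⟨congrFun hm 1, congrFun hm 2⟩
  exact ⟨M, linearMap_ext hMX hMY hMZ⟩

lemma ker_cocycleCoords [NeZero (2 : K)] :
    LinearMap.ker (cocycleCoords K) = (LinearMap.range (adMap K)).comap (Z1 K).subtype := by
  ext m
  exact ⟨mem_range_adMap_of_cocycleCoords_eq_zero m, cocycleCoords_eq_zero_of_mem_range_adMap⟩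

variable (K) in
def rho (i : Fin 4) : h1 K →ₗ[K] gl3 K where
  toFun A := ![rho1 K, rho2 K, rho3 K, rho4 K] i A
  map_add' A B := by fin_cases i <;> simp [rho1, rho2, rho3, rho4] <;> module
  map_smul' c A := by fin_cases i <;> simp [rho1, rho2, rho3, rho4] <;> module

lemma rho_mem_Z1 (i : Fin 4) : rho K i ∈ Z1 K := by
  intro A B
  obtain ⟨a00, a01, a02, a11, a12, a22⟩ := upper_entries_eq_zero A
  obtain ⟨b00, b01, b02, b11, b12, b22⟩ := upper_entries_eq_zero B
  ext k l
  fin_cases i <;> fin_cases k <;> fin_cases l <;>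
    simp [rho, rho1, rho2, rho3, rho4, E, mul_apply, Fin.sum_univ_three, one_apply,
      a00, a01, a02, a11, a12, a22, b00, b01, b02, b11, b12, b22] <;> ring

lemma cocycleCoords_rho (i : Fin 4) :
    cocycleCoords K ⟨rho K i, rho_mem_Z1 i⟩ = Pi.single i 1 := by
  ext j
  fin_cases i <;> fin_cases j <;>
    simp [cocycleCoords, rho, rho1, rho2, rho3, rho4, X, Z, E, one_apply]

lemma cocycleCoords_surjective : Function.Surjective (cocycleCoords K) := fun v =>
  ⟨∑ i, v i • ⟨rho K i, rho_mem_Z1 i⟩, by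
    simp only [map_sum, map_smul, cocycleCoords_rho, ← pi_eq_sum_univ' v]⟩

end

set_option maxSynthPendingDepth 3 in
set_option synthInstance.maxHeartbeats 1000000 in
/-- `H¹(h₁, gl(3,K)) = Z¹/B¹` has dimension 4, where `B¹` is viewed inside `Z¹` via
`Submodule.comap (Z1 K).subtype`. -/
theorem finrank_H1 (K : Type*) [Field K] [CharZero K] :
    Module.finrank K
      ((↥(Z1 K)) ⧸ (Submodule.comap (Z1 K).subtype (LinearMap.range (adMap K)))) = 4 := by
  rw [← ker_cocycleCoords,
    ((cocycleCoords K).quotKerEquivOfSurjective cocycleCoords_surjective).finrank_eq,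
    Module.finrank_fin_fun]
end

section
/- The cup products [[ρⁱ,ρʲ]] vanish identically for all pairs (i,j) with 1 ≤ i ≤ j ≤ 4 except (i,j) ∈ {(1,2),(1,3),(3,3)}; i.e., for such pairs, [ρⁱ(A),ρʲ(B)] + [ρʲ(A),ρⁱ(B)] - [ρⁱ(B),ρʲ(A)] - [ρʲ(B),ρⁱ(A)] = 0 for all A,B ∈ h₁. -/
open Matrix

variable (K : Type*) [Field K]

/-- The family `ρ¹, ρ², ρ³, ρ⁴` (0-indexed). -/
def rhoF (i : Fin 4) : gl3 K → gl3 K := ![rho1 K, rho2 K, rho3 K, rho4 K] i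

/-! Since `⁅x, y⁆ = -⁅y, x⁆`, the cup product `[[f, g]](A, B)` equals `2 (⁅f A, g B⁆ + ⁅g A, f B⁆)`.
It vanishes when the values of `f` commute with those of `g`: this covers every pair involving the
scalar cocycle `ρ⁴`, and the squares of `ρ¹` and `ρ²`, whose values lie on a line. For `(ρ², ρ³)`
the bracket `⁅ρ²(A), ρ³(B)⁆ = -A_Z B_Z e₂₁` is symmetric in `A` and `B`, so the two terms cancel. -/

section CupProduct

variable {L R : Type*} [Ring R]

def cupProduct (f g : L → R) (A B : L) : R :=
  (f A * g B - g B * f A) + (g A * f B - f B * g A)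
    - (f B * g A - g A * f B) - (g B * f A - f A * g B)

theorem cupProduct_eq_zero_of_commute {f g : L → R} (h : ∀ a b, Commute (f a) (g b)) (A B : L) :
    cupProduct f g A B = 0 := by
  simp only [cupProduct, (h A B).eq, (h B A).eq, sub_self, add_zero]

theorem cupProduct_eq_zero_of_lie_symm {f g : L → R} (h : ∀ a b, ⁅f a, g b⁆ = ⁅f b, g a⁆)
    (A B : L) : cupProduct f g A B = 0 := by
  have hAB := sub_eq_zero.mpr (h A B)
  rw [Ring.lie_def, Ring.lie_def] at hAB
  calc cupProduct f g A B
      = (2 : ℤ) • ((f A * g B - g B * f A) - (f B * g A - g A * f B)) := by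
        rw [cupProduct]; abel
    _ = 0 := by rw [hAB, smul_zero]

end CupProduct

theorem rho4_commute (A X : gl3 K) : Commute (rho4 K A) X :=
  (Commute.one_left X).smul_left _

theorem rho1_commute_rho1 (A B : gl3 K) : Commute (rho1 K A) (rho1 K B) :=
  ((Commute.refl _).smul_left _).smul_right _

theorem rho2_commute_rho2 (A B : gl3 K) : Commute (rho2 K A) (rho2 K B) :=
  ((Commute.refl _).smul_left _).smul_right _

theorem lie_rho2_rho3 (A B : gl3 K) : ⁅rho2 K A, rho3 K B⁆ = -(A 2 1 * B 2 1) • E K 1 0 := by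
  have h₁ : E K 1 0 * E K 1 0 = 0 := single_mul_single_of_ne _ _ _ _ (by decide) _
  have h₂ : E K 1 0 * E K 1 1 = 0 := single_mul_single_of_ne _ _ _ _ (by decide) _
  have h₃ : E K 1 0 * E K 0 0 = E K 1 0 := by rw [E, E, single_mul_single_same, mul_one]
  have h₄ : E K 1 1 * E K 1 0 = E K 1 0 := by rw [E, E, single_mul_single_same, mul_one]
  have h₅ : E K 0 0 * E K 1 0 = 0 := single_mul_single_of_ne _ _ _ _ (by decide) _
  simp only [rho2, rho3, Ring.lie_def, mul_add, add_mul, smul_mul_assoc,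
    mul_smul_comm, h₁, h₂, h₃, h₄, h₅]
  module

theorem lie_rho2_rho3_symm (A B : gl3 K) : ⁅rho2 K A, rho3 K B⁆ = ⁅rho2 K B, rho3 K A⁆ := by
  rw [lie_rho2_rho3, lie_rho2_rho3, mul_comm]

/-- All cup products `[[ρⁱ,ρʲ]]` with `i ≤ j` vanish identically except for the pairs
`(1,2), (1,3), (3,3)` (here 0-indexed as `(0,1), (0,2), (2,2)`). -/
theorem cup_products_vanish :
    ∀ i j : Fin 4, i ≤ j →
      (i, j) ≠ ((0 : Fin 4), (1 : Fin 4)) →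
      (i, j) ≠ ((0 : Fin 4), (2 : Fin 4)) →
      (i, j) ≠ ((2 : Fin 4), (2 : Fin 4)) →
      ∀ A ∈ lowerTri K, ∀ B ∈ lowerTri K,
        (rhoF K i A * rhoF K j B - rhoF K j B * rhoF K i A)
          + (rhoF K j A * rhoF K i B - rhoF K i B * rhoF K j A)
          - (rhoF K i B * rhoF K j A - rhoF K j A * rhoF K i B)
          - (rhoF K j B * rhoF K i A - rhoF K i A * rhoF K j B) = 0 := by
  intro i j hij h01 h02 h22 A _ B _
  change cupProduct (rhoF K i) (rhoF K j) A B = 0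
  fin_cases i <;> fin_cases j <;>
    simp only [rhoF, Fin.zero_eta, Fin.mk_one, Fin.reduceFinMk, Matrix.cons_val] at *
  all_goals first
    | exact absurd hij (by decide)
    | exact absurd rfl h01
    | exact absurd rfl h02
    | exact absurd rfl h22
    | skip
  · exact cupProduct_eq_zero_of_commute (rho1_commute_rho1 K) A B
  · exact cupProduct_eq_zero_of_commute (fun a b => (rho4_commute K b _).symm) A B
  · exact cupProduct_eq_zero_of_commute (rho2_commute_rho2 K) A B
  · exact cupProduct_eq_zero_of_lie_symm (lie_rho2_rho3_symm K) A B
  all_goals exact cupProduct_eq_zero_of_commute (fun a b => (rho4_commute K b _).symm) A B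
end

section
/- For all parameter values t₁, t₂, t₃, t₄ ∈ K, the map ρ̃(t) : h₁ → gl(3,K) sending the matrix with entries a = A₂₁, b = A₃₂, c = A₃₁ (and zeros elsewhere) to the matrix with rows [bt₃ + at₁t₃ + at₄, 0, 0; a + bt₂ + at₁t₂ + ct₃, 2bt₃ + 2at₁t₃ + at₄, -bt₃² - at₁t₃²; c, b + at₁, at₄] is a Lie algebra homomorphism: ρ̃(t)([A,B]) = [ρ̃(t)(A), ρ̃(t)(B)] for all A, B ∈ h₁. -/
/-! `h₁` is the Heisenberg algebra: `⁅E 2 1, E 1 0⁆ = E 2 0` is central, and in any Lie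
algebra three elements with these relations satisfy
`⁅a • x + b • y + c • z, a' • x + b' • y + c' • z⁆ = (a * b' - b * a') • z`.
Since `ρ̃(t)` is linear in the coordinates `A 2 1, A 1 0, A 2 0`, it is a homomorphism as soon as
the images of `E 2 1, E 1 0, E 2 0` satisfy the same relations, a finite matrix computation. -/

open Matrix

variable (K : Type*) [Field K]

/-- The miniversal deformation `ρ̃(t₁,t₂,t₃,t₄)` applied to the strictly lower
triangular matrix with entries `a = A 1 0`, `b = A 2 1`, `c = A 2 0` (0-based). -/
def defo (t1 t2 t3 t4 : K) (A : gl3 K) : gl3 K :=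
  !![A 2 1 * t3 + A 1 0 * t1 * t3 + A 1 0 * t4, 0, 0;
     A 1 0 + A 2 1 * t2 + A 1 0 * t1 * t2 + A 2 0 * t3,
       2 * A 2 1 * t3 + 2 * A 1 0 * t1 * t3 + A 1 0 * t4,
       -(A 2 1) * t3 ^ 2 - A 1 0 * t1 * t3 ^ 2;
     A 2 0, A 2 1 + A 1 0 * t1, A 1 0 * t4]

attribute [local instance 100] LieRing.ofAssociativeRing

theorem lie_smul_add_smul_add_smul_of_heisenberg {R L : Type*} [CommRing R] [LieRing L]
    [LieAlgebra R L] {x y z : L} (hxy : ⁅x, y⁆ = z) (hxz : ⁅x, z⁆ = 0) (hyz : ⁅y, z⁆ = 0)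
    (a b c a' b' c' : R) :
    ⁅a • x + b • y + c • z, a' • x + b' • y + c' • z⁆ = (a * b' - b * a') • z := by
  have hyx : ⁅y, x⁆ = -z := by rw [← lie_skew, hxy]
  have hzx : ⁅z, x⁆ = 0 := by rw [← lie_skew, hxz, neg_zero]
  have hzy : ⁅z, y⁆ = 0 := by rw [← lie_skew, hyz, neg_zero]
  simp only [add_lie, lie_add, smul_lie, lie_smul, lie_self, hxy, hxz, hyz, hyx, hzx, hzy]
  module

theorem eq_sum_E_of_mem_lowerTri {A : gl3 K} (hA : A ∈ lowerTri K) :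
    A = A 2 1 • E K 2 1 + A 1 0 • E K 1 0 + A 2 0 • E K 2 0 := by
  ext i j
  fin_cases i <;> fin_cases j <;> simp [E, hA 0 0, hA 0 1, hA 0 2, hA 1 1, hA 1 2, hA 2 2]

theorem lie_E_21_E_10 : ⁅E K 2 1, E K 1 0⁆ = E K 2 0 := by
  simp [E, Ring.lie_def]

theorem lie_E_21_E_20 : ⁅E K 2 1, E K 2 0⁆ = 0 := by
  simp [E, Ring.lie_def]

theorem lie_E_10_E_20 : ⁅E K 1 0, E K 2 0⁆ = 0 := by
  simp [E, Ring.lie_def]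

theorem lie_eq_of_mem_lowerTri {A B : gl3 K} (hA : A ∈ lowerTri K) (hB : B ∈ lowerTri K) :
    ⁅A, B⁆ = (A 2 1 * B 1 0 - A 1 0 * B 2 1) • E K 2 0 := by
  conv_lhs => rw [eq_sum_E_of_mem_lowerTri K hA, eq_sum_E_of_mem_lowerTri K hB]
  exact lie_smul_add_smul_add_smul_of_heisenberg (lie_E_21_E_10 K) (lie_E_21_E_20 K)
    (lie_E_10_E_20 K) _ _ _ _ _ _

section defo

variable (t1 t2 t3 t4 : K)

theorem defo_eq_sum_defo_E (A : gl3 K) :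
    defo K t1 t2 t3 t4 A = A 2 1 • defo K t1 t2 t3 t4 (E K 2 1)
      + A 1 0 • defo K t1 t2 t3 t4 (E K 1 0) + A 2 0 • defo K t1 t2 t3 t4 (E K 2 0) := by
  ext i j
  fin_cases i <;> fin_cases j <;> simp [defo, E] <;> ring

theorem defo_smul (k : K) (A : gl3 K) :
    defo K t1 t2 t3 t4 (k • A) = k • defo K t1 t2 t3 t4 A := by
  ext i j
  fin_cases i <;> fin_cases j <;> simp [defo] <;> ring

theorem defo_E_21 : defo K t1 t2 t3 t4 (E K 2 1) = !![t3, 0, 0; t2, 2 * t3, -t3 ^ 2; 0, 1, 0] := by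
  ext i j
  fin_cases i <;> fin_cases j <;> simp [defo, E]

theorem defo_E_10 : defo K t1 t2 t3 t4 (E K 1 0) =
    !![t1 * t3 + t4, 0, 0; 1 + t1 * t2, 2 * t1 * t3 + t4, -(t1 * t3 ^ 2); 0, t1, t4] := by
  ext i j
  fin_cases i <;> fin_cases j <;> simp [defo, E]

theorem defo_E_20 : defo K t1 t2 t3 t4 (E K 2 0) = !![0, 0, 0; t3, 0, 0; 1, 0, 0] := by
  ext i j
  fin_cases i <;> fin_cases j <;> simp [defo, E]

theorem lie_defo_E_21_defo_E_10 :
    ⁅defo K t1 t2 t3 t4 (E K 2 1), defo K t1 t2 t3 t4 (E K 1 0)⁆ =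
      defo K t1 t2 t3 t4 (E K 2 0) := by
  rw [defo_E_21, defo_E_10, defo_E_20, Ring.lie_def, mul_fin_three, mul_fin_three]
  ext i j
  fin_cases i <;> fin_cases j <;> simp <;> ring

theorem lie_defo_E_21_defo_E_20 :
    ⁅defo K t1 t2 t3 t4 (E K 2 1), defo K t1 t2 t3 t4 (E K 2 0)⁆ = 0 := by
  rw [defo_E_21, defo_E_20, Ring.lie_def, mul_fin_three, mul_fin_three]
  ext i j
  fin_cases i <;> fin_cases j <;> simp
  ring

theorem lie_defo_E_10_defo_E_20 :
    ⁅defo K t1 t2 t3 t4 (E K 1 0), defo K t1 t2 t3 t4 (E K 2 0)⁆ = 0 := by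
  rw [defo_E_10, defo_E_20, Ring.lie_def, mul_fin_three, mul_fin_three]
  ext i j
  fin_cases i <;> fin_cases j <;> simp
  ring

end defo

/-- For all parameters, `ρ̃(t)` is a Lie algebra homomorphism on `h₁`:
`ρ̃(t)([A,B]) = [ρ̃(t)A, ρ̃(t)B]`. -/
theorem defo_is_hom :
    ∀ t1 t2 t3 t4 : K, ∀ A ∈ lowerTri K, ∀ B ∈ lowerTri K,
      defo K t1 t2 t3 t4 (A * B - B * A) =
        defo K t1 t2 t3 t4 A * defo K t1 t2 t3 t4 B
          - defo K t1 t2 t3 t4 B * defo K t1 t2 t3 t4 A := by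
  intro t1 t2 t3 t4 A hA B hB
  have hρ : ⁅defo K t1 t2 t3 t4 A, defo K t1 t2 t3 t4 B⁆ =
      (A 2 1 * B 1 0 - A 1 0 * B 2 1) • defo K t1 t2 t3 t4 (E K 2 0) := by
    conv_lhs => rw [defo_eq_sum_defo_E K t1 t2 t3 t4 A, defo_eq_sum_defo_E K t1 t2 t3 t4 B]
    exact lie_smul_add_smul_add_smul_of_heisenberg (lie_defo_E_21_defo_E_10 K t1 t2 t3 t4)
      (lie_defo_E_21_defo_E_20 K t1 t2 t3 t4) (lie_defo_E_10_defo_E_20 K t1 t2 t3 t4) _ _ _ _ _ _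
  rw [← Ring.lie_def, ← Ring.lie_def, hρ, lie_eq_of_mem_lowerTri K hA hB, defo_smul]
end
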